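/- arXiv:math/0312337 — 5 statements merged into one kernel-verified Lean document; each statement's English description precedes it below -/
import Mathlib

section
/- Let H be a finite-dimensional Hopf algebra over a field k, λ a right integral for H* and Λ a left integral for H with λ(Λ) = 1. Then for every a ∈ H one has a = λ(a Λ₍₁₎) S(Λ₍₂₎), where Δ(Λ) = Λ₍₁₎ ⊗ Λ₍₂₎ in Sweedler notation. -/
/-!
For every `b`, `λ(a₍₁₎ b) a₍₂₎ = λ(a b₍₁₎) S(b₍₂₎)`: applying `S` to the right-integral identity
for `a₍₁₎ b` gives `λ(a₍₁₎ b) a₍₂₎ = λ(a₍₁₎ b₍₁₎) S(b₍₂₎) S(a₍₂₎) a₍₃₎`, and `S(a₍₂₎) a₍₃₎ = ε(a₍₂₎)`.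
For `b = Λ` the left side is `λ(a₍₁₎ Λ) a₍₂₎ = ε(a₍₁₎) a₍₂₎ = a`.
-/

open TensorProduct Coalgebra HopfAlgebra

universe w

namespace Coalgebra.Repr

variable {R A : Type*} [CommSemiring R] [AddCommMonoid A] [Module R A] [CoalgebraStruct R A]
  {a : A} {ι : Type*}

noncomputable def uliftFin (𝓡 : Repr R a ι) : Repr R a (ULift.{w} (Fin 𝓡.index.card)) where
  index := Finset.univ
  left i := 𝓡.left (𝓡.index.equivFin.symm i.down)
  right i := 𝓡.right (𝓡.index.equivFin.symm i.down)
  eq := by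
    rw [← 𝓡.eq, ← Finset.sum_coe_sort 𝓡.index]
    exact Equiv.sum_comp (Equiv.ulift.trans 𝓡.index.equivFin.symm)
      (fun i => 𝓡.left i ⊗ₜ[R] 𝓡.right i)

lemma sum_eq_lift_comul {M : Type*} [AddCommMonoid M] [Module R M] (𝓡 : Repr R a ι)
    (f : A →ₗ[R] A →ₗ[R] M) :
    ∑ i ∈ 𝓡.index, f (𝓡.left i) (𝓡.right i) = TensorProduct.lift f (comul a) := by
  simp [← 𝓡.eq]

end Coalgebra.Repr

section Integral

variable {k H : Type*} [CommSemiring k] [Semiring H] [Module k H] [CoalgebraStruct k H]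

/-- `λ(x₍₁₎) x₍₂₎ = λ(x) 1`, with the Sweedler sum taken without choosing a representation. -/
def IsRightIntegral (lam : H →ₗ[k] k) : Prop :=
  ∀ x : H, TensorProduct.lift (LinearMap.lsmul k H ∘ₗ lam) (comul x) = lam x • 1

variable {lam : H →ₗ[k] k}

lemma IsRightIntegral.sum_smul_eq (hlam : IsRightIntegral lam) {x : H} {ι : Type*}
    (𝓡 : Repr k x ι) : ∑ i ∈ 𝓡.index, lam (𝓡.left i) • 𝓡.right i = lam x • 1 :=
  (𝓡.sum_eq_lift_comul _).trans (hlam x)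

lemma isRightIntegral_of_forall_repr
    (hlam : ∀ (x : H) {ι : Type w} (𝓡 : Repr k x ι),
      ∑ i ∈ 𝓡.index, lam (𝓡.left i) • 𝓡.right i = lam x • 1) :
    IsRightIntegral lam := fun x =>
  ((ℛ k x).uliftFin.sum_eq_lift_comul _).symm.trans (hlam x _)

end Integral

section Hopf

variable {k H : Type*} [CommSemiring k] [Semiring H] [HopfAlgebra k H]
  {lam : H →ₗ[k] k} {ι κ : Type*}

lemma IsRightIntegral.sum_smul_antipode_eq (hlam : IsRightIntegral lam) {x : H}
    (𝓡 : Repr k x ι) : ∑ i ∈ 𝓡.index, lam (𝓡.left i) • antipode k (𝓡.right i) = lam x • 1 := by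
  simpa using congr(antipode k $(hlam.sum_smul_eq 𝓡))

lemma sum_smul_antipode_mul_eq {a : H} (g : H →ₗ[k] k) (𝓡 : Repr k a ι) {ι₁ : ι → Type*}
    (𝓡₁ : ∀ i, Repr k (𝓡.left i) (ι₁ i)) :
    ∑ i ∈ 𝓡.index, ∑ p ∈ (𝓡₁ i).index,
      g ((𝓡₁ i).left p) • (antipode k ((𝓡₁ i).right p) * 𝓡.right i) = g a • 1 := by
  have coassoc := congr(TensorProduct.lid k H (TensorProduct.map g
    (LinearMap.mul' k H ∘ₗ (antipode k).rTensor H)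
      $(sum_tmul_tmul_eq 𝓡 𝓡₁ fun i => ℛ k (𝓡.right i))))
  have counit_right := congr(TensorProduct.lid k k $(sum_map_tmul_counit_eq g a (repr := 𝓡)))
  simp only [map_sum, TensorProduct.map_tmul, TensorProduct.lid_tmul, LinearMap.comp_apply,
    LinearMap.rTensor_tmul, LinearMap.mul'_apply, smul_eq_mul] at coassoc counit_right
  rw [coassoc]
  simp only [← Finset.smul_sum, sum_antipode_mul_eq_smul, smul_smul, ← Finset.sum_smul,
    counit_right, mul_one]

lemma IsRightIntegral.sum_mul_smul_eq_sum_smul_antipode (hlam : IsRightIntegral lam) {a b : H}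
    (𝓐 : Repr k a ι) (𝓑 : Repr k b κ) :
    ∑ i ∈ 𝓐.index, lam (𝓐.left i * b) • 𝓐.right i =
      ∑ j ∈ 𝓑.index, lam (a * 𝓑.left j) • antipode k (𝓑.right j) := by
  let 𝓐₁ := fun i => ℛ k (𝓐.left i)
  calc ∑ i ∈ 𝓐.index, lam (𝓐.left i * b) • 𝓐.right i
      = ∑ i ∈ 𝓐.index, (∑ q ∈ ((𝓐₁ i).mul 𝓑).index,
          lam (((𝓐₁ i).mul 𝓑).left q) • antipode k (((𝓐₁ i).mul 𝓑).right q)) * 𝓐.right i := by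
        simp only [hlam.sum_smul_antipode_eq, smul_mul_assoc, one_mul]
    _ = ∑ j ∈ 𝓑.index, antipode k (𝓑.right j) * ∑ i ∈ 𝓐.index, ∑ p ∈ (𝓐₁ i).index,
          lam ((𝓐₁ i).left p * 𝓑.left j) • (antipode k ((𝓐₁ i).right p) * 𝓐.right i) := by
        simp only [Repr.mul_index, Repr.mul_left, Repr.mul_right, Finset.sum_product,
          antipode_mul_antidistrib, Finset.sum_mul, Finset.mul_sum, smul_mul_assoc, mul_smul_comm,
          mul_assoc]
        exact (Finset.sum_congr rfl fun i _ => Finset.sum_comm).trans Finset.sum_comm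
    _ = ∑ j ∈ 𝓑.index, antipode k (𝓑.right j) * (lam (a * 𝓑.left j) • 1) := by
        congr! with j
        exact sum_smul_antipode_mul_eq (lam ∘ₗ LinearMap.mulRight k (𝓑.left j)) 𝓐 𝓐₁
    _ = ∑ j ∈ 𝓑.index, lam (a * 𝓑.left j) • antipode k (𝓑.right j) := by
        simp only [mul_smul_comm, mul_one]

end Hopf

theorem stmt0_general {k H : Type*} [Field k] [Ring H] [HopfAlgebra k H]
    (lam : H →ₗ[k] k) (Λ : H)
    -- λ is a right integral for H*:  λ(x₍₁₎) x₍₂₎ = λ(x) 1 for all x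
    (hlam : ∀ (x : H) {ι : Type*} (r : Coalgebra.Repr k x ι),
      ∑ i ∈ r.index, lam (r.left i) • r.right i = lam x • (1 : H))
    -- Λ is a left integral for H:  x Λ = ε(x) Λ for all x
    (hΛ : ∀ x : H, x * Λ = Coalgebra.counit (R := k) x • Λ)
    (hpair : lam Λ = 1) :
    ∀ (a : H) {ι : Type*} (r : Coalgebra.Repr k Λ ι),
      a = ∑ i ∈ r.index, lam (a * r.left i) • HopfAlgebra.antipode (R := k) (r.right i) := by
  intro a ι r
  have lam_mul_integral (x : H) : lam (x * Λ) = counit x := by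
    rw [hΛ, map_smul, hpair, smul_eq_mul, mul_one]
  calc a = ∑ i ∈ (ℛ k a).index, counit (R := k) ((ℛ k a).left i) • (ℛ k a).right i :=
        (sum_counit_smul _).symm
    _ = ∑ i ∈ (ℛ k a).index, lam ((ℛ k a).left i * Λ) • (ℛ k a).right i := by
        simp only [lam_mul_integral]
    _ = _ := (isRightIntegral_of_forall_repr hlam).sum_mul_smul_eq_sum_smul_antipode _ r

theorem stmt0 {k H : Type*} [Field k] [Ring H] [HopfAlgebra k H] [FiniteDimensional k H]
    (lam : H →ₗ[k] k) (Λ : H)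
    -- λ is a right integral for H*:  λ(x₍₁₎) x₍₂₎ = λ(x) 1 for all x
    (hlam : ∀ (x : H) {ι : Type*} (r : Coalgebra.Repr k x ι),
      ∑ i ∈ r.index, lam (r.left i) • r.right i = lam x • (1 : H))
    -- Λ is a left integral for H:  x Λ = ε(x) Λ for all x
    (hΛ : ∀ x : H, x * Λ = Coalgebra.counit (R := k) x • Λ)
    (hpair : lam Λ = 1) :
    ∀ (a : H) {ι : Type*} (r : Coalgebra.Repr k Λ ι),
      a = ∑ i ∈ r.index, lam (a * r.left i) • HopfAlgebra.antipode (R := k) (r.right i) :=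
  stmt0_general lam Λ hlam hΛ hpair
end

section
/- Let H be a finite-dimensional Hopf algebra, λ a right integral for H* and Λ a left integral for H with λ(Λ) = λ(S(Λ)) = 1. For a ∈ H and f ∈ H*, the following are equivalent: (i) f(x) = λ(a x) for all x ∈ H; (ii) a = f(Λ₍₁₎) S(Λ₍₂₎). -/
/-! Write `K a = λ(a Λ₍₁₎) S(Λ₍₂₎)`. In the convolution algebra of `End H`,
`(K ⋆ S)(x) = λ(x₍₁₎Λ₍₁₎) S(x₍₂₎Λ₍₂₎) = S(λ(xΛ) 1) = ε(x) λ(Λ) 1 = ε(x) 1`, by the right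
integral property of `λ` applied to `xΛ` and `xΛ = ε(x)Λ`. As `S` is the convolution inverse of
`id`, `K = id`: `a ↦ λ(a ·)` has the left inverse `f ↦ f(Λ₍₁₎) S(Λ₍₂₎)`, so it is injective,
hence bijective since `dim H = dim H*`. Both implications follow. -/

open TensorProduct Coalgebra HopfAlgebra

namespace Coalgebra

variable {R A : Type*} [CommSemiring R] [AddCommMonoid A] [Module R A] [CoalgebraStruct R A]

theorem Repr.sum_eq_lift {M : Type*} [AddCommMonoid M] [Module R M] {a : A} {ι : Type*}
    (r : Repr R a ι) (β : A →ₗ[R] A →ₗ[R] M) :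
    ∑ i ∈ r.index, β (r.left i) (r.right i) = TensorProduct.lift β (comul a) := by
  simp [← r.eq]

universe u in
theorem exists_repr (a : A) : ∃ ι : Type u, Nonempty (Repr R a ι) := by
  obtain ⟨n, l, r, h⟩ := TensorProduct.exists_sum_tmul_eq (R := R) (comul a)
  refine ⟨ULift (Fin n), ⟨⟨Finset.univ, l ∘ ULift.down, r ∘ ULift.down, ?_⟩⟩⟩
  rw [h]
  exact Equiv.sum_comp Equiv.ulift fun j => l j ⊗ₜ r j

end Coalgebra

section Integrals

variable {k H : Type*} [CommSemiring k] [Semiring H] [HopfAlgebra k H] {lam : H →ₗ[k] k} {Λ : H}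

theorem convMul_antipode_eq_one_of_integral
    (hlam : ∀ x : H, TensorProduct.lift (LinearMap.lsmul k H ∘ₗ lam) (comul x) = lam x • 1)
    (hΛ : ∀ x : H, x * Λ = counit (R := k) x • Λ) (hpair : lam Λ = 1)
    {ι : Type*} (r : Repr k Λ ι) :
    WithConv.toConv (∑ i ∈ r.index,
        (lam ∘ₗ LinearMap.mulRight k (r.left i)).smulRight (antipode k (r.right i))) *
      WithConv.toConv (antipode k) = 1 := by
  ext x
  let rxΛ := (ℛ k x).mul r
  calc _ = ∑ p ∈ rxΛ.index, lam (rxΛ.left p) • antipode k (rxΛ.right p) := by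
        simp [(ℛ k x).convMul_apply, rxΛ, Finset.sum_product, Finset.sum_mul,
          antipode_mul_antidistrib, Finset.sum_comm (s := r.index)]
    _ = antipode k (lam (x * Λ) • 1) := by
        rw [← hlam, ← rxΛ.sum_eq_lift]
        simp
    _ = _ := by
        rw [hΛ]
        simp [hpair, Algebra.algebraMap_eq_smul_one]

theorem sum_integral_mul_antipode
    (hlam : ∀ x : H, TensorProduct.lift (LinearMap.lsmul k H ∘ₗ lam) (comul x) = lam x • 1)
    (hΛ : ∀ x : H, x * Λ = counit (R := k) x • Λ) (hpair : lam Λ = 1)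
    {ι : Type*} (r : Repr k Λ ι) (a : H) :
    ∑ i ∈ r.index, lam (a * r.left i) • antipode k (r.right i) = a := by
  have hK := left_inv_eq_right_inv (convMul_antipode_eq_one_of_integral hlam hΛ hpair r)
    LinearMap.antipode_mul_id
  simpa using congr($hK a)

end Integrals

theorem surjective_integral_mul {k H : Type*} [Field k] [Ring H] [HopfAlgebra k H]
    [FiniteDimensional k H] {lam : H →ₗ[k] k} {Λ : H}
    (hlam : ∀ x : H, TensorProduct.lift (LinearMap.lsmul k H ∘ₗ lam) (comul x) = lam x • 1)
    (hΛ : ∀ x : H, x * Λ = counit (R := k) x • Λ) (hpair : lam Λ = 1) :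
    Function.Surjective ((LinearMap.mul k H).compr₂ lam) := by
  have hinj : Function.Injective ((LinearMap.mul k H).compr₂ lam) := fun a b hab => by
    rw [← sum_integral_mul_antipode hlam hΛ hpair (ℛ k Λ) a,
      ← sum_integral_mul_antipode hlam hΛ hpair (ℛ k Λ) b]
    have hab' (x : H) : lam (a * x) = lam (b * x) := LinearMap.congr_fun hab x
    simp only [hab']
  exact (LinearMap.injective_iff_surjective_of_finrank_eq_finrank
    Subspace.dual_finrank_eq.symm).mp hinj

theorem stmt1_general {k H : Type*} [Field k] [Ring H] [HopfAlgebra k H] [FiniteDimensional k H]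
    (lam : H →ₗ[k] k) (Λ : H)
    (hlam : ∀ (x : H) {ι : Type _} (r : Coalgebra.Repr k x ι),
      ∑ i ∈ r.index, lam (r.left i) • r.right i = lam x • (1 : H))
    (hΛ : ∀ x : H, x * Λ = Coalgebra.counit (R := k) x • Λ)
    (hpair : lam Λ = 1)
    (a : H) (f : H →ₗ[k] k) :
    (∀ x : H, f x = lam (a * x)) ↔
      (∀ {ι : Type _} (r : Coalgebra.Repr k Λ ι),
        a = ∑ i ∈ r.index, f (r.left i) • HopfAlgebra.antipode (R := k) (r.right i)) := by
  have hright (x : H) : TensorProduct.lift (LinearMap.lsmul k H ∘ₗ lam) (comul x) = lam x • 1 := by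
    obtain ⟨ι, ⟨r⟩⟩ := exists_repr (R := k) x
    rw [← r.sum_eq_lift]
    exact hlam x r
  constructor
  · intro hf ι r
    simp_rw [hf]
    exact (sum_integral_mul_antipode hright hΛ hpair r a).symm
  · intro ha
    obtain ⟨b, rfl⟩ := surjective_integral_mul hright hΛ hpair f
    obtain ⟨ι, ⟨r⟩⟩ := exists_repr (R := k) Λ
    have hab : a = b := (ha r).trans (sum_integral_mul_antipode hright hΛ hpair r b)
    simp [hab]

theorem stmt1 {k H : Type*} [Field k] [Ring H] [HopfAlgebra k H] [FiniteDimensional k H]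
    (lam : H →ₗ[k] k) (Λ : H)
    (hlam : ∀ (x : H) {ι : Type _} (r : Coalgebra.Repr k x ι),
      ∑ i ∈ r.index, lam (r.left i) • r.right i = lam x • (1 : H))
    (hΛ : ∀ x : H, x * Λ = Coalgebra.counit (R := k) x • Λ)
    (hpair : lam Λ = 1) (hpair' : lam (HopfAlgebra.antipode (R := k) Λ) = 1)
    (a : H) (f : H →ₗ[k] k) :
    (∀ x : H, f x = lam (a * x)) ↔
      (∀ {ι : Type _} (r : Coalgebra.Repr k Λ ι),
        a = ∑ i ∈ r.index, f (r.left i) • HopfAlgebra.antipode (R := k) (r.right i)) :=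
  stmt1_general lam Λ hlam hΛ hpair a f
end

section
/- Let H be a finite-dimensional Hopf algebra with right integral λ for H* and distinguished grouplike ν of H*. If 1 ∈ L(H) (i.e. x ↼ ν = x for all x ∈ H), then H is unimodular, i.e. ν = ε. Conversely, if H is unimodular then L(H) = Z(H), the center of H. -/
open TensorProduct Coalgebra HopfAlgebra

/-- The right action `x ↼ ν = ν(x₍₁₎) x₍₂₎`. -/
noncomputable def actnu {k H : Type*} [Field k] [Ring H] [HopfAlgebra k H]
    (ν : H →ₐ[k] k) : H →ₗ[k] H :=
  (TensorProduct.lid k H).toLinearMap ∘ₗ (TensorProduct.map ν.toLinearMap LinearMap.id)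
    ∘ₗ (Coalgebra.comul : H →ₗ[k] H ⊗[k] H)

section actnu

variable {k H : Type*} [Field k] [Ring H] [HopfAlgebra k H] (ν : H →ₐ[k] k)

theorem counit_actnu (x : H) : counit (R := k) (actnu ν x) = ν x := by
  have hswap : counit ∘ₗ (TensorProduct.lid k H).toLinearMap ∘ₗ
      TensorProduct.map ν.toLinearMap LinearMap.id =
      ν.toLinearMap ∘ₗ (TensorProduct.rid k H).toLinearMap ∘ₗ LinearMap.lTensor H counit := by
    ext a b
    simp [mul_comm]
  have := congrArg (fun f : H →ₗ[k] k => f x)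
    (congrArg (· ∘ₗ (comul : H →ₗ[k] H ⊗[k] H)) hswap)
  simpa [actnu, LinearMap.comp_assoc] using this

theorem actnu_apply_of_eq_counit (hν : ∀ x : H, ν x = counit (R := k) x) (x : H) :
    actnu ν x = x := by
  have hmap : TensorProduct.map ν.toLinearMap (LinearMap.id (M := H)) =
      LinearMap.rTensor H counit := by
    ext a b
    simp [hν a]
  simp [actnu, hmap]

end actnu

theorem stmt9_general {k H : Type*} [Field k] [Ring H] [HopfAlgebra k H]
    (ν : H →ₐ[k] k) :
    -- 1 ∈ L(H) implies unimodularity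
    ((∀ x : H, actnu ν x * 1 = 1 * x) → ∀ x : H, ν x = Coalgebra.counit (R := k) x) ∧
    -- unimodularity implies L(H) = Z(H)
    ((∀ x : H, ν x = Coalgebra.counit (R := k) x) →
      {z : H | ∀ x : H, actnu ν x * z = z * x} = {z : H | ∀ x : H, z * x = x * z}) := by
  refine ⟨fun hL1 x => ?_, fun hunimod => ?_⟩
  · have hx : actnu ν x = x := by simpa using hL1 x
    rw [← counit_actnu ν x, hx]
  · ext z
    simp only [Set.mem_ofPred_eq, actnu_apply_of_eq_counit ν hunimod]
    exact forall_congr' fun _ => eq_comm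

theorem stmt9 {k H : Type*} [Field k] [Ring H] [HopfAlgebra k H] [FiniteDimensional k H]
    (lam : H →ₗ[k] k) (hlam0 : lam ≠ 0)
    (hlam : ∀ (x : H) (ι : Type _) (r : Coalgebra.Repr k x ι),
      ∑ i ∈ r.index, lam (r.left i) • r.right i = lam x • (1 : H))
    (Λ : H) (hΛ0 : Λ ≠ 0)
    (hΛ : ∀ x : H, x * Λ = Coalgebra.counit (R := k) x • Λ)
    (ν : H →ₐ[k] k) (hν : ∀ x : H, Λ * x = ν x • Λ) :
    -- 1 ∈ L(H) implies unimodularity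
    ((∀ x : H, actnu ν x * 1 = 1 * x) → ∀ x : H, ν x = Coalgebra.counit (R := k) x) ∧
    -- unimodularity implies L(H) = Z(H)
    ((∀ x : H, ν x = Coalgebra.counit (R := k) x) →
      {z : H | ∀ x : H, actnu ν x * z = z * x} = {z : H | ∀ x : H, z * x = x * z}) :=
  stmt9_general ν
end

section
/- Let H_n be the Hopf algebra as above and ν its distinguished grouplike of H_n* (ν(a) = −1, ν(x) = 0). Then L(H_n) = { z ∈ H_n | (h ↼ ν) z = z h ∀h } is the span of { a^k x | 0 ≤ k < 2n }, and the center Z(H_n) is the span of { a^{2k} | 0 ≤ k < n }. -/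
/- STATEMENT 18: H_n as above, ν its distinguished grouplike of H_n* (ν(a) = −1,
ν(x) = 0).  Then L(H_n) = span{ a^k x | 0 ≤ k < 2n } and
Z(H_n) = span{ a^{2k} | 0 ≤ k < n }. -/

open TensorProduct Coalgebra HopfAlgebra

/-!
The action `h ↦ h ↼ ν` is the algebra endomorphism of `H_n` with `a ↦ -a`, `x ↦ x`, so membership
in `L(H_n)` or in the center only has to be tested against the generators `a` and `x`.
Every element splits as `z₀ + z₁` with `z₀ ∈ span{aˡ}` commuting with `a` and
`z₁ ∈ span{aˡx}` anticommuting with `a`; as `a` is a unit and `2 ≠ 0`, anticommuting with `a`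
forces `z₀ = 0`, and commuting with `a` forces `z₁ = 0`. Finally `x aˡ = (-1)ˡ aˡ x`, so an element
of `span{aˡ}` commuting with `x` has no odd powers of `a`, by independence of the `aˡx`.
-/

noncomputable def actnuAlgHom {k H : Type*} [Field k] [Ring H] [HopfAlgebra k H]
    (ν : H →ₐ[k] k) : H →ₐ[k] H :=
  (Algebra.TensorProduct.lid k H).toAlgHom.comp
    ((Algebra.TensorProduct.map ν (AlgHom.id k H)).comp (Bialgebra.comulAlgHom k H))

theorem actnuAlgHom_apply {k H : Type*} [Field k] [Ring H] [HopfAlgebra k H]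
    (ν : H →ₐ[k] k) (h : H) : actnuAlgHom ν h = actnu ν h :=
  rfl

section TwistedCentralizer

variable {k H : Type*} [CommRing k] [Ring H] [Algebra k H]

def twistedCentralizer (φ : H →ₐ[k] H) (s : Set H) : Submodule k H where
  carrier := {z | ∀ g ∈ s, φ g * z = z * g}
  add_mem' hu hv g hg := by rw [mul_add, add_mul, hu g hg, hv g hg]
  zero_mem' g _ := by rw [mul_zero, zero_mul]
  smul_mem' r u hu g hg := by rw [mul_smul_comm, smul_mul_assoc, hu g hg]

theorem mem_twistedCentralizer {φ : H →ₐ[k] H} {s : Set H} {z : H} :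
    z ∈ twistedCentralizer φ s ↔ ∀ g ∈ s, φ g * z = z * g :=
  Iff.rfl

theorem twistedCentralizer_eq_of_adjoin_eq_top {s : Set H} (hs : Algebra.adjoin k s = ⊤)
    (φ : H →ₐ[k] H) : twistedCentralizer φ Set.univ = twistedCentralizer φ s := by
  refine le_antisymm (fun z hz g _ => hz g trivial) fun z hz h _ => ?_
  refine Algebra.adjoin_induction (p := fun h _ => φ h * z = z * h) hz
    (fun r => by rw [AlgHom.commutes, Algebra.commutes]) (fun g h _ _ hg hh => ?_)
    (fun g h _ _ hg hh => ?_) (hs ▸ Algebra.mem_top : h ∈ Algebra.adjoin k s)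
  · rw [map_add, add_mul, mul_add, hg, hh]
  · rw [map_mul, mul_assoc, hh, ← mul_assoc, hg, mul_assoc]

end TwistedCentralizer

section AnticommutingPair

variable {k H : Type*} [CommRing k] [Ring H] [Algebra k H] {n : ℕ} {a x : H}

theorem mul_pow_of_mul_eq_neg (hax : a * x = -(x * a)) (l : ℕ) :
    x * a ^ l = (-1 : k) ^ l • (a ^ l * x) := by
  induction l with
  | zero => simp
  | succ l ih =>
    rw [pow_succ' a, ← mul_assoc, ← neg_eq_iff_eq_neg.2 hax, neg_mul, mul_assoc, ih,
      mul_smul_comm, ← mul_assoc, pow_succ', neg_one_mul, neg_smul]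

theorem commute_of_mem_span_pow {z : H}
    (hz : z ∈ Submodule.span k (Set.range fun l : Fin (2 * n) => a ^ (l : ℕ))) :
    Commute a z := by
  refine (Subalgebra.mem_centralizer_iff k (s := {a})).1 ?_ a rfl
  refine Submodule.span_le (p := (Subalgebra.centralizer k {a}).toSubmodule) |>.2 ?_ hz
  rintro _ ⟨l, rfl⟩ _ rfl
  exact (Commute.self_pow _ l).eq

theorem mul_eq_neg_of_mem_span_pow_mul (hax : a * x = -(x * a)) {z : H}
    (hz : z ∈ Submodule.span k (Set.range fun l : Fin (2 * n) => a ^ (l : ℕ) * x)) :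
    a * z = -(z * a) := by
  rw [← add_eq_zero_iff_eq_neg]
  refine Submodule.span_le (p := LinearMap.ker (LinearMap.mulLeft k a + LinearMap.mulRight k a))
    |>.2 ?_ hz
  rintro _ ⟨l, rfl⟩
  simp only [SetLike.mem_coe, LinearMap.mem_ker, LinearMap.add_apply, LinearMap.mulLeft_apply,
    LinearMap.mulRight_apply]
  rw [mul_assoc, ← neg_eq_iff_eq_neg.2 hax, mul_neg, ← mul_assoc, ← mul_assoc,
    (Commute.self_pow a l).eq, add_neg_cancel]

variable (B : Module.Basis (Fin (2 * n) × Fin 2) k H)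
  (hB : ∀ (l : Fin (2 * n)) (m : Fin 2), B (l, m) = a ^ (l : ℕ) * x ^ (m : ℕ))
include hB

theorem adjoin_eq_top_of_basis : Algebra.adjoin k {a, x} = ⊤ := by
  refine eq_top_iff.2 fun h _ => ?_
  refine (Subalgebra.mem_toSubmodule _).1 <| Submodule.span_le.2 ?_ (B.mem_span h)
  rintro _ ⟨⟨l, m⟩, rfl⟩
  rw [SetLike.mem_coe, Subalgebra.mem_toSubmodule, hB]
  exact mul_mem (pow_mem (Algebra.subset_adjoin (by simp)) _)
    (pow_mem (Algebra.subset_adjoin (by simp)) _)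

theorem span_pow_sup_span_pow_mul_eq_top :
    Submodule.span k (Set.range fun l : Fin (2 * n) => a ^ (l : ℕ)) ⊔
      Submodule.span k (Set.range fun l : Fin (2 * n) => a ^ (l : ℕ) * x) = ⊤ := by
  rw [← top_le_iff, ← B.span_eq, Submodule.span_le]
  rintro _ ⟨⟨l, m⟩, rfl⟩
  fin_cases m
  · exact Submodule.mem_sup_left (Submodule.subset_span ⟨l, by simp [hB]⟩)
  · exact Submodule.mem_sup_right (Submodule.subset_span ⟨l, by simp [hB]⟩)

theorem linearIndependent_pow_mul :
    LinearIndependent k fun l : Fin (2 * n) => a ^ (l : ℕ) * x := by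
  convert B.linearIndependent.comp (fun l => (l, 1)) fun _ _ h => (Prod.mk.inj h).1 with l
  simp [hB]

end AnticommutingPair

section AnticommutingPairOverField

variable {k H : Type*} [Field k] [Ring H] [Algebra k H] {n : ℕ} {a x : H}
  (B : Module.Basis (Fin (2 * n) × Fin 2) k H)
  (hB : ∀ (l : Fin (2 * n)) (m : Fin 2), B (l, m) = a ^ (l : ℕ) * x ^ (m : ℕ))
include hB

theorem mem_span_pow_mul_of_neg_mul_eq (hax : a * x = -(x * a)) (ha : IsUnit a)
    (h2 : (2 : k) ≠ 0) {z : H} (hz : -a * z = z * a) :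
    z ∈ Submodule.span k (Set.range fun l : Fin (2 * n) => a ^ (l : ℕ) * x) := by
  obtain ⟨z₀, hz₀, z₁, hz₁, rfl⟩ :=
    Submodule.mem_sup.1 <| Submodule.eq_top_iff'.1 (span_pow_sup_span_pow_mul_eq_top B hB) z
  rw [neg_mul, mul_add, add_mul, ← (commute_of_mem_span_pow hz₀).eq,
    ← neg_eq_iff_eq_neg.2 (mul_eq_neg_of_mem_span_pow_mul hax hz₁), ← sub_eq_zero] at hz
  have h : (2 : k) • (a * z₀) = 0 := by
    rw [two_smul, ← neg_eq_zero, ← hz]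
    abel
  rwa [ha.mul_right_eq_zero.1 ((smul_eq_zero.1 h).resolve_left h2), zero_add]

theorem mem_span_pow_of_mul_comm (hax : a * x = -(x * a)) (ha : IsUnit a)
    (h2 : (2 : k) ≠ 0) {z : H} (hz : a * z = z * a) :
    z ∈ Submodule.span k (Set.range fun l : Fin (2 * n) => a ^ (l : ℕ)) := by
  obtain ⟨z₀, hz₀, z₁, hz₁, rfl⟩ :=
    Submodule.mem_sup.1 <| Submodule.eq_top_iff'.1 (span_pow_sup_span_pow_mul_eq_top B hB) z
  rw [mul_add, add_mul, ← (commute_of_mem_span_pow hz₀).eq,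
    ← neg_eq_iff_eq_neg.2 (mul_eq_neg_of_mem_span_pow_mul hax hz₁), ← sub_eq_zero] at hz
  have h : (2 : k) • (a * z₁) = 0 := by
    rw [two_smul, ← hz]
    abel
  rwa [ha.mul_right_eq_zero.1 ((smul_eq_zero.1 h).resolve_left h2), add_zero]

theorem mem_span_even_pow_of_mul_comm (hax : a * x = -(x * a)) (h2 : (2 : k) ≠ 0) {z : H}
    (hz : z ∈ Submodule.span k (Set.range fun l : Fin (2 * n) => a ^ (l : ℕ)))
    (hzx : x * z = z * x) :
    z ∈ Submodule.span k (Set.range fun j : Fin n => a ^ (2 * (j : ℕ))) := by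
  obtain ⟨α, rfl⟩ := (Submodule.mem_span_range_iff_exists_fun k).1 hz
  have hsum : ∑ l, (α l * ((-1) ^ (l : ℕ) - 1)) • (a ^ (l : ℕ) * x) = 0 := by
    rw [← sub_eq_zero.2 hzx, Finset.mul_sum, Finset.sum_mul, ← Finset.sum_sub_distrib]
    refine Finset.sum_congr rfl fun l _ => ?_
    rw [mul_smul_comm, smul_mul_assoc, mul_pow_of_mul_eq_neg (k := k) hax, smul_smul, mul_sub,
      sub_smul, mul_one]
  refine Submodule.sum_mem _ fun l _ => ?_
  rcases Nat.even_or_odd (l : ℕ) with ⟨j, hj⟩ | hl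
  · refine Submodule.smul_mem _ _ (Submodule.subset_span ⟨⟨j, by omega⟩, ?_⟩)
    simp [hj, two_mul]
  · have hind := linearIndependent_pow_mul B hB
    have hα := Fintype.linearIndependent_iff.1 hind (fun l => α l * ((-1) ^ (l : ℕ) - 1)) hsum l
    rw [hl.neg_one_pow, mul_eq_zero] at hα
    rw [hα.resolve_right (by rwa [← neg_add', neg_eq_zero, one_add_one_eq_two]), zero_smul]
    exact Submodule.zero_mem _

theorem twistedCentralizer_eq_span_pow_mul (hax : a * x = -(x * a)) (hx : x * x = 0)
    (ha : IsUnit a) (h2 : (2 : k) ≠ 0) {φ : H →ₐ[k] H} (hφa : φ a = -a) (hφx : φ x = x) :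
    twistedCentralizer φ {a, x} =
      Submodule.span k (Set.range fun l : Fin (2 * n) => a ^ (l : ℕ) * x) := by
  refine le_antisymm (fun z hz => ?_) (Submodule.span_le.2 ?_)
  · exact mem_span_pow_mul_of_neg_mul_eq B hB hax ha h2 (hφa ▸ hz a (by simp))
  · rintro _ ⟨l, rfl⟩
    simp only [SetLike.mem_coe, mem_twistedCentralizer, Set.mem_insert_iff,
      Set.mem_singleton_iff, forall_eq_or_imp, forall_eq, hφa, hφx]
    refine ⟨?_, ?_⟩
    · rw [neg_mul, neg_eq_iff_eq_neg,
        mul_eq_neg_of_mem_span_pow_mul (k := k) hax (Submodule.subset_span ⟨l, rfl⟩)]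
    · rw [← mul_assoc, mul_pow_of_mul_eq_neg (k := k) hax, smul_mul_assoc, mul_assoc, hx,
        mul_zero, smul_zero]

theorem twistedCentralizer_id_eq_span_even_pow (hax : a * x = -(x * a))
    (ha : IsUnit a) (h2 : (2 : k) ≠ 0) :
    twistedCentralizer (AlgHom.id k H) {a, x} =
      Submodule.span k (Set.range fun j : Fin n => a ^ (2 * (j : ℕ))) := by
  refine le_antisymm (fun z hz => ?_) (Submodule.span_le.2 ?_)
  · exact mem_span_even_pow_of_mul_comm B hB hax h2
      (mem_span_pow_of_mul_comm B hB hax ha h2 (hz a (by simp))) (hz x (by simp))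
  · rintro _ ⟨j, rfl⟩
    simp only [SetLike.mem_coe, mem_twistedCentralizer, Set.mem_insert_iff,
      Set.mem_singleton_iff, forall_eq_or_imp, forall_eq, AlgHom.id_apply]
    refine ⟨(Commute.self_pow a _).eq, ?_⟩
    rw [mul_pow_of_mul_eq_neg (k := k) hax, pow_mul, neg_one_sq, one_pow, one_smul]

end AnticommutingPairOverField

theorem stmt18_general {k H : Type*} [Field k] [Ring H] [HopfAlgebra k H]
    (n : ℕ) (hchar : (2 * n : k) ≠ 0)
    (a x : H)
    (ha : a ^ (2 * n) = 1) (hx : x * x = 0) (hax : a * x = - (x * a))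
    (hΔa : Coalgebra.comul (R := k) a = a ⊗ₜ[k] a)
    (hΔx : Coalgebra.comul (R := k) x = x ⊗ₜ[k] (a ^ n) + 1 ⊗ₜ[k] x)
    (B : Module.Basis (Fin (2 * n) × Fin 2) k H)
    (hB : ∀ (l : Fin (2 * n)) (m : Fin 2), B (l, m) = a ^ (l : ℕ) * x ^ (m : ℕ))
    -- ν is the distinguished grouplike of H_n*
    (ν : H →ₐ[k] k) (hνa : ν a = -1) (hνx : ν x = 0) :
    -- L(H_n) = span{ a^k x | 0 ≤ k < 2n }
    {z : H | ∀ h : H, actnu ν h * z = z * h}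
      = ↑(Submodule.span k (Set.range fun l : Fin (2 * n) => a ^ (l : ℕ) * x)) ∧
    -- Z(H_n) = span{ a^{2k} | 0 ≤ k < n }
    {z : H | ∀ h : H, z * h = h * z}
      = ↑(Submodule.span k (Set.range fun l : Fin n => a ^ (2 * (l : ℕ)))) := by
  have h2 : (2 : k) ≠ 0 := left_ne_zero_of_mul hchar
  have hunit : IsUnit a :=
    .of_pow_eq_one ha fun h => hchar (by exact_mod_cast congrArg (Nat.cast (R := k)) h)
  have hadj := twistedCentralizer_eq_of_adjoin_eq_top (adjoin_eq_top_of_basis B hB)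
  have hφa : actnuAlgHom ν a = -a := by simp [actnuAlgHom_apply, actnu, hΔa, hνa]
  have hφx : actnuAlgHom ν x = x := by simp [actnuAlgHom_apply, actnu, hΔx, hνx]
  constructor
  · rw [← twistedCentralizer_eq_span_pow_mul B hB hax hx hunit h2 hφa hφx, ← hadj]
    simp [Set.ext_iff, mem_twistedCentralizer, actnuAlgHom_apply]
  · rw [← twistedCentralizer_id_eq_span_even_pow B hB hax hunit h2, ← hadj]
    simp [Set.ext_iff, mem_twistedCentralizer, eq_comm]

theorem stmt18 {k H : Type*} [Field k] [Ring H] [HopfAlgebra k H]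
    (n : ℕ) (hn1 : Odd n) (hn2 : 0 < n) (hchar : (2 * n : k) ≠ 0)
    (a x : H)
    (ha : a ^ (2 * n) = 1) (hx : x * x = 0) (hax : a * x = - (x * a))
    (hΔa : Coalgebra.comul (R := k) a = a ⊗ₜ[k] a)
    (hΔx : Coalgebra.comul (R := k) x = x ⊗ₜ[k] (a ^ n) + 1 ⊗ₜ[k] x)
    (hεa : Coalgebra.counit (R := k) a = 1)
    (hεx : Coalgebra.counit (R := k) x = 0)
    (hSa : HopfAlgebra.antipode (R := k) a = a ^ (2 * n - 1))
    (hSx : HopfAlgebra.antipode (R := k) x = a ^ n * x)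
    (B : Module.Basis (Fin (2 * n) × Fin 2) k H)
    (hB : ∀ (l : Fin (2 * n)) (m : Fin 2), B (l, m) = a ^ (l : ℕ) * x ^ (m : ℕ))
    -- ν is the distinguished grouplike of H_n*
    (ν : H →ₐ[k] k) (hνa : ν a = -1) (hνx : ν x = 0) :
    -- L(H_n) = span{ a^k x | 0 ≤ k < 2n }
    {z : H | ∀ h : H, actnu ν h * z = z * h}
      = ↑(Submodule.span k (Set.range fun l : Fin (2 * n) => a ^ (l : ℕ) * x)) ∧
    -- Z(H_n) = span{ a^{2k} | 0 ≤ k < n }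
    {z : H | ∀ h : H, z * h = h * z}
      = ↑(Submodule.span k (Set.range fun l : Fin n => a ^ (2 * (l : ℕ)))) :=
  stmt18_general n hchar a x ha hx hax hΔa hΔx B hB ν hνa hνx
end

section
/- Let H be a ribbon Hopf algebra with braided Hopf algebra structure H^Bd on the underlying algebra H, where Δ^Bd(x) = Σᵢ S(a_{i(1)}) x₍₁₎ a_{i(2)} ⊗ S(bᵢ) x₍₂₎ (with R = Σᵢ aᵢ⊗bᵢ). Let λ be a right integral for H*, z ∈ L(H). Then for all x, y ∈ H: (λ·z ⊗ λ·z)(Δ^Bd(x)(1⊗y)) = λ(z x₍₁₎) λ(z x₍₂₎ y), i.e. Σᵢ λ(z S(a_{i(1)}) x₍₁₎ a_{i(2)}) λ(z S(bᵢ) x₍₂₎ y) = λ(z x₍₁₎) λ(z x₍₂₎ y). -/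
/-!
The functional `λ(z ·)` is invariant under the adjoint action `c ↦ S(a₁) c a₂`: the twisted
trace property `λ(z x y) = λ(z S²(y) x)` moves `a₂` to the front, and
`S²(a₂) S(a₁) = S(a₁ S(a₂)) = ε(a)`. So the left side is `Σᵢ ε(aᵢ) λ(z x₍₁₎) λ(z S(bᵢ) x₍₂₎ y)`,
and `Σᵢ ε(aᵢ) bᵢ = 1` because `ε ⊗ id ⊗ id` turns `(Δ ⊗ id) R = R₁₃ R₂₃` into
`R = (1 ⊗ Σᵢ ε(aᵢ) bᵢ) R`, with `R` invertible.
-/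

open TensorProduct Coalgebra HopfAlgebra

section CounitSlant

variable {k H : Type*} [CommSemiring k] [Semiring H] [Bialgebra k H]

noncomputable def counitSlant : H ⊗[k] H →ₗ[k] H :=
  (TensorProduct.lid k H).toLinearMap ∘ₗ (counit : H →ₗ[k] k).rTensor H

@[simp]
lemma counitSlant_tmul (a b : H) : counitSlant (k := k) (a ⊗ₜ b) = counit (R := k) a • b := by
  simp [counitSlant]

lemma counitSlant_comp_comul : counitSlant ∘ₗ comul = (LinearMap.id : H →ₗ[k] H) := by
  ext a
  simp [counitSlant, rTensor_counit_comul]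

lemma rTensor_counitSlant_mul (X Y : H ⊗[k] H) :
    (counitSlant.rTensor H)
        ((Algebra.TensorProduct.includeLeft : H →ₐ[k] H ⊗[k] H).toLinearMap.rTensor H X *
          (Algebra.TensorProduct.includeRight : H →ₐ[k] H ⊗[k] H).toLinearMap.rTensor H Y) =
      ((1 : H) ⊗ₜ[k] counitSlant X) * Y := by
  induction X using TensorProduct.induction_on with
  | zero => simp
  | add X X' hX hX' => rw [map_add, add_mul, map_add, hX, hX', map_add, tmul_add, add_mul]
  | tmul a b =>
    induction Y using TensorProduct.induction_on with
    | zero => simp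
    | add Y Y' hY hY' => rw [map_add, mul_add, map_add, hY, hY', mul_add]
    | tmul c d =>
      simp only [LinearMap.rTensor_tmul, AlgHom.toLinearMap_apply,
        Algebra.TensorProduct.includeLeft_apply, Algebra.TensorProduct.includeRight_apply,
        Algebra.TensorProduct.tmul_mul_tmul, one_mul, mul_one, counitSlant_tmul,
        smul_tmul, Algebra.smul_mul_assoc]

lemma counitSlant_eq_one_of_rTensor_comul {R Rinv : H ⊗[k] H} (hR : R * Rinv = 1)
    (hΔR : (comul (R := k) (A := H)).rTensor H R =
      (Algebra.TensorProduct.includeLeft : H →ₐ[k] H ⊗[k] H).toLinearMap.rTensor H R *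
        (Algebra.TensorProduct.includeRight : H →ₐ[k] H ⊗[k] H).toLinearMap.rTensor H R) :
    counitSlant R = 1 := by
  have hfix : ((1 : H) ⊗ₜ[k] counitSlant R) * R = R := by
    rw [← rTensor_counitSlant_mul, ← hΔR, ← LinearMap.rTensor_comp_apply,
      counitSlant_comp_comul, LinearMap.rTensor_id_apply]
  have hone : (1 : H) ⊗ₜ[k] counitSlant R = 1 := by
    rw [← mul_one ((1 : H) ⊗ₜ[k] counitSlant R), ← hR, ← mul_assoc, hfix, hR]
  simpa [Algebra.TensorProduct.one_def] using congrArg counitSlant hone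

end CounitSlant

section TwistedTrace

variable {k H : Type*} [CommSemiring k] [Semiring H] [HopfAlgebra k H]

lemma sum_antipode_antipode_mul_antipode_eq_smul {a : H} {ι : Type*} (r : Repr k a ι) :
    ∑ p ∈ r.index, antipode k (antipode k (r.right p)) * antipode k (r.left p) =
      counit (R := k) a • (1 : H) := by
  simp_rw [← antipode_mul_antidistrib, ← map_sum, sum_mul_antipode_eq_smul, map_smul,
    antipode_one]

lemma sum_apply_mul_adjoint_eq_counit_mul (lam : H →ₗ[k] k) (z : H)
    (hz : ∀ x y : H, lam (z * x * y) = lam (z * antipode k (antipode k y) * x))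
    {a : H} {ι : Type*} (r : Repr k a ι) (c : H) :
    ∑ p ∈ r.index, lam (z * antipode k (r.left p) * c * r.right p) =
      counit (R := k) a * lam (z * c) := by
  have hterm : ∀ p, lam (z * antipode k (r.left p) * c * r.right p) =
      lam (z * (antipode k (antipode k (r.right p)) * antipode k (r.left p)) * c) := by
    intro p
    rw [mul_assoc z, hz]
    simp only [mul_assoc]
  simp_rw [hterm, ← map_sum, ← Finset.sum_mul, ← Finset.mul_sum,
    sum_antipode_antipode_mul_antipode_eq_smul, mul_smul_comm, mul_one, smul_mul_assoc, map_smul,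
    smul_eq_mul]

end TwistedTrace

theorem stmt19_general {k H : Type*} [Field k] [Ring H] [HopfAlgebra k H]
    -- quasitriangular structure
    (R Rinv : H ⊗[k] H) (hR1 : R * Rinv = 1)
    (hR13_23 : LinearMap.rTensor H (Coalgebra.comul (R := k) (A := H)) R =
      LinearMap.rTensor H (Algebra.TensorProduct.includeLeft : H →ₐ[k] H ⊗[k] H).toLinearMap R *
      LinearMap.rTensor H (Algebra.TensorProduct.includeRight : H →ₐ[k] H ⊗[k] H).toLinearMap R)
    -- a finite representation R = Σᵢ aᵢ ⊗ bᵢ of the R-matrix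
    (ιR : Type) (sR : Finset ιR) (aa bb : ιR → H)
    (hRrep : R = ∑ i ∈ sR, aa i ⊗ₜ[k] bb i)
    -- a right integral λ for H*
    (lam : H →ₗ[k] k)
    (z : H)
    -- the identity satisfied on L(H):  λ(zxy) = λ(z S²(y) x)
    (hzprop : ∀ x y : H, lam (z * x * y) =
      lam (z * HopfAlgebra.antipode (R := k) (HopfAlgebra.antipode (R := k) y) * x)) :
    ∀ (x y : H) {ιx : Type*} (rx : Coalgebra.Repr k x ιx) {ιa : ιR → Type*}
      (ra : ∀ i : ιR, Coalgebra.Repr k (aa i) (ιa i)),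
      ∑ i ∈ sR, ∑ p ∈ (ra i).index, ∑ q ∈ rx.index,
        lam (z * HopfAlgebra.antipode (R := k) ((ra i).left p) * rx.left q * (ra i).right p) *
          lam (z * HopfAlgebra.antipode (R := k) (bb i) * rx.right q * y)
      = ∑ q ∈ rx.index, lam (z * rx.left q) * lam (z * rx.right q * y) := by
  intro x y ιx rx ιa ra
  have hRnormal : ∑ i ∈ sR, counit (R := k) (aa i) • bb i = 1 := by
    simpa [hRrep, map_sum] using counitSlant_eq_one_of_rTensor_comul hR1 hR13_23
  calc _ = ∑ i ∈ sR, ∑ q ∈ rx.index, counit (R := k) (aa i) * lam (z * rx.left q) *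
          lam (z * antipode k (bb i) * rx.right q * y) := by
        refine Finset.sum_congr rfl fun i _ => ?_
        rw [Finset.sum_comm]
        refine Finset.sum_congr rfl fun q _ => ?_
        rw [← Finset.sum_mul, sum_apply_mul_adjoint_eq_counit_mul lam z hzprop]
    _ = ∑ q ∈ rx.index, lam (z * rx.left q) *
          lam (z * antipode k (∑ i ∈ sR, counit (R := k) (aa i) • bb i) * rx.right q * y) := by
        simp only [map_sum, map_smul, Finset.mul_sum, Finset.sum_mul, mul_smul_comm,
          smul_mul_assoc, smul_eq_mul]
        rw [Finset.sum_comm]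
        refine Finset.sum_congr rfl fun q _ => Finset.sum_congr rfl fun i _ => ?_
        ring
    _ = _ := by rw [hRnormal, antipode_one, mul_one]

theorem stmt19 {k H : Type*} [Field k] [Ring H] [HopfAlgebra k H] [FiniteDimensional k H]
    -- quasitriangular structure
    (R Rinv : H ⊗[k] H) (hR1 : R * Rinv = 1) (hR2 : Rinv * R = 1)
    (hRcomm : ∀ x : H,
      R * Coalgebra.comul (R := k) x = (TensorProduct.comm k H H) (Coalgebra.comul (R := k) x) * R)
    (hR13_12 : LinearMap.lTensor H (Coalgebra.comul (R := k) (A := H)) R =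
      LinearMap.lTensor H (Algebra.TensorProduct.includeRight : H →ₐ[k] H ⊗[k] H).toLinearMap R *
      LinearMap.lTensor H (Algebra.TensorProduct.includeLeft : H →ₐ[k] H ⊗[k] H).toLinearMap R)
    (hR13_23 : LinearMap.rTensor H (Coalgebra.comul (R := k) (A := H)) R =
      LinearMap.rTensor H (Algebra.TensorProduct.includeLeft : H →ₐ[k] H ⊗[k] H).toLinearMap R *
      LinearMap.rTensor H (Algebra.TensorProduct.includeRight : H →ₐ[k] H ⊗[k] H).toLinearMap R)
    -- ribbon structure
    (θ θinv : H) (hθ1 : θ * θinv = 1) (hθ2 : θinv * θ = 1)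
    (hθc : ∀ x : H, θ * x = x * θ)
    (hθS : HopfAlgebra.antipode (R := k) θ = θ)
    (hθΔ : Coalgebra.comul (R := k) θ = (θ ⊗ₜ[k] θ) * ((TensorProduct.comm k H H) R * R))
    -- a finite representation R = Σᵢ aᵢ ⊗ bᵢ of the R-matrix
    (ιR : Type) (sR : Finset ιR) (aa bb : ιR → H)
    (hRrep : R = ∑ i ∈ sR, aa i ⊗ₜ[k] bb i)
    -- a right integral λ for H*
    (lam : H →ₗ[k] k)
    (hlam : ∀ (x : H) {ι : Type*} (r : Coalgebra.Repr k x ι),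
      ∑ i ∈ r.index, lam (r.left i) • r.right i = lam x • (1 : H))
    -- the distinguished grouplike ν of H* and an element z ∈ L(H)
    (Λ : H) (hΛ0 : Λ ≠ 0)
    (hΛ : ∀ w : H, w * Λ = Coalgebra.counit (R := k) w • Λ)
    (ν : H →ₐ[k] k) (hν : ∀ w : H, Λ * w = ν w • Λ)
    (z : H) (hz : ∀ w : H, actnu ν w * z = z * w)
    -- the identity satisfied on L(H):  λ(zxy) = λ(z S²(y) x)
    (hzprop : ∀ x y : H, lam (z * x * y) =
      lam (z * HopfAlgebra.antipode (R := k) (HopfAlgebra.antipode (R := k) y) * x)) :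
    ∀ (x y : H) {ιx : Type*} (rx : Coalgebra.Repr k x ιx) {ιa : ιR → Type*}
      (ra : ∀ i : ιR, Coalgebra.Repr k (aa i) (ιa i)),
      ∑ i ∈ sR, ∑ p ∈ (ra i).index, ∑ q ∈ rx.index,
        lam (z * HopfAlgebra.antipode (R := k) ((ra i).left p) * rx.left q * (ra i).right p) *
          lam (z * HopfAlgebra.antipode (R := k) (bb i) * rx.right q * y)
      = ∑ q ∈ rx.index, lam (z * rx.left q) * lam (z * rx.right q * y) :=
  stmt19_general R Rinv hR1 hR13_23 ιR sR aa bb hRrep lam z hzprop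
end
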